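/- Knot insertion preserves the B-spline curve geometrically: if one knot ξ̄ ∈ [ξ_k, ξ_{k+1}) is inserted into the knot vector Ξ and the new control points B̄_i are defined by B̄_i = α_i B_i + (1−α_i) B_{i−1} with α_i = 1 for i ≤ k−p, α_i = (ξ̄−ξ_i)/(ξ_{i+p}−ξ_i) for k−p+1 ≤ i ≤ k, and α_i = 0 for i ≥ k+1, then the new curve Σ_i N̄_{i,p}(ξ) B̄_i equals the original curve Σ_i N_{i,p}(ξ) B_i for all ξ in the parameter domain. -/

import Mathlib

/-!
Inserting `ξb` refines the knot vector, and every old basis function is a two-term combination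
of new ones, `N_{i,q} = α^q_i N̄_{i,q} + (1 - α^q_{i+1}) N̄_{i+1,q}`, with Boehm's weights `α^q`
of degree `q`. This follows by induction on `q` from the Cox–de Boor recursion: comparing the
coefficients of `N̄_{i,q}`, `N̄_{i+1,q}` and `N̄_{i+2,q}` leaves three rational identities, checked
according to the position of `i` relative to `k`. Substituting the relation of degree `p` into
the curve and shifting the summation index produces the new control points.
-/

/-- Division with the convention that terms with zero denominator are zero. -/
noncomputable def divz (a b : ℝ) : ℝ := if b = 0 then 0 else a / b

/-- Cox–de Boor recursion for B-spline basis functions `N_{i,p}` on the knot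
vector `T` (indexed by integers), with half-open spans and the convention that
any term with a zero denominator is taken to be zero. -/
noncomputable def bspl (T : ℤ → ℝ) : ℕ → ℤ → ℝ → ℝ
  | 0, i, x => if T i ≤ x ∧ x < T (i + 1) then 1 else 0
  | (p + 1), i, x =>
      divz (x - T i) (T (i + (p : ℤ) + 1) - T i) * bspl T p i x
      + divz (T (i + (p : ℤ) + 2) - x) (T (i + (p : ℤ) + 2) - T (i + 1)) * bspl T p (i + 1) x

open Finset

lemma sum_Icc_combination_smul {R E : Type*} [CommRing R] [AddCommGroup E] [Module R E]
    {a b : ℤ} (hab : a ≤ b) (N c : ℤ → R) (B : ℤ → E) (ha : c a = 1) (hb : c (b + 1) = 0) :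
    ∑ i ∈ Icc a b, (c i * N i + (1 - c (i + 1)) * N (i + 1)) • B i
      = ∑ i ∈ Icc a (b + 1), N i • (c i • B i + (1 - c i) • B (i - 1)) := by
  have hleft : ∑ i ∈ Icc a b, (c i * N i) • B i = ∑ i ∈ Icc a (b + 1), N i • c i • B i := by
    rw [← insert_Icc_right_eq_Icc_add_one (by omega), sum_insert (by simp), hb]
    simp only [zero_smul, smul_zero, zero_add, smul_smul, mul_comm]
  have hright : ∑ i ∈ Icc a b, ((1 - c (i + 1)) * N (i + 1)) • B i
      = ∑ i ∈ Icc a (b + 1), N i • (1 - c i) • B (i - 1) := by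
    rw [← insert_Icc_add_one_left_eq_Icc (show a ≤ b + 1 by omega), sum_insert (by simp), ha,
      sub_self, zero_smul, smul_zero, zero_add, ← map_add_right_Icc, sum_map]
    simp only [addRightEmbedding_apply, add_sub_cancel_right, smul_smul, mul_comm]
  simp only [add_smul, smul_add, sum_add_distrib, hleft, hright]

lemma divz_eq_div (a : ℝ) {b : ℝ} (h : b ≠ 0) : divz a b = a / b := if_neg h

lemma bspl_support {T : ℤ → ℝ} (hT : Monotone T) {p : ℕ} {i : ℤ} {x : ℝ}
    (h : bspl T p i x ≠ 0) : T i ≤ x ∧ x < T (i + p + 1) := by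
  induction p generalizing i with
  | zero =>
    simp only [bspl, ne_eq, ite_eq_right_iff, Classical.not_imp] at h
    simpa using h.1
  | succ q ih =>
    simp only [bspl] at h
    by_cases h0 : bspl T q i x = 0
    · rw [h0, mul_zero, zero_add] at h
      obtain ⟨hl, hr⟩ := ih (right_ne_zero_of_mul h)
      exact ⟨(hT (by omega)).trans hl, by push_cast; convert hr using 2; ring⟩
    · obtain ⟨hl, hr⟩ := ih h0
      exact ⟨hl, hr.trans_le (hT (by push_cast; omega))⟩

lemma indicator_Ico_split {a b c x : ℝ} (hab : a ≤ b) (hbc : b ≤ c) :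
    (if a ≤ x ∧ x < c then (1 : ℝ) else 0)
      = (if a ≤ x ∧ x < b then 1 else 0) + (if b ≤ x ∧ x < c then 1 else 0) := by
  split_ifs <;> grind

def insertKnot (T : ℤ → ℝ) (k : ℤ) (ξb : ℝ) (i : ℤ) : ℝ :=
  if i ≤ k then T i else if i = k + 1 then ξb else T (i - 1)

-- Boehm's weights in degree `m`; the control-point weights `α_i` are those of degree `p`.
noncomputable def insertWeight (T : ℤ → ℝ) (k : ℤ) (ξb : ℝ) (m i : ℤ) : ℝ :=
  if i ≤ k - m then 1 else if i ≤ k then divz (ξb - T i) (T (i + m) - T i) else 0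

section
variable {T : ℤ → ℝ} {k : ℤ} {ξb : ℝ}

lemma insertKnot_of_le {i : ℤ} (h : i ≤ k) : insertKnot T k ξb i = T i := if_pos h

lemma insertKnot_self_add_one : insertKnot T k ξb (k + 1) = ξb := by
  simp [insertKnot]

lemma insertKnot_of_lt {i : ℤ} (h : k + 1 < i) : insertKnot T k ξb i = T (i - 1) := by
  rw [insertKnot, if_neg (by omega), if_neg (by omega)]

lemma insertWeight_of_le {m i : ℤ} (h : i ≤ k - m) : insertWeight T k ξb m i = 1 := if_pos h

lemma insertWeight_of_lt {m i : ℤ} (hm : 0 ≤ m) (h : k < i) : insertWeight T k ξb m i = 0 := by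
  rw [insertWeight, if_neg (by omega), if_neg (by omega)]

lemma insertWeight_eq_divz {m i : ℤ} (h1 : k - m < i) (h2 : i ≤ k) :
    insertWeight T k ξb m i = divz (ξb - T i) (T (i + m) - T i) := by
  rw [insertWeight, if_neg (by omega), if_pos h2]

end

section
variable {T : ℤ → ℝ} {k : ℤ} {ξb : ℝ} (hT : Monotone T) (hξ : ξb ∈ Set.Ico (T k) (T (k + 1)))
include hT hξ

local notation "T'" => insertKnot T k ξb
local notation "w" => insertWeight T k ξb

lemma knot_sub_ne_zero {a b : ℤ} (ha : a ≤ k) (hb : k < b) : T b - T a ≠ 0 :=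
  sub_ne_zero.mpr ((hT ha).trans_lt (hξ.1.trans_lt (hξ.2.trans_le (hT hb)))).ne'

lemma knot_sub_insert_ne_zero {b : ℤ} (hb : k < b) : T b - ξb ≠ 0 :=
  sub_ne_zero.mpr (hξ.2.trans_le (hT hb)).ne'

lemma monotone_insertKnot : Monotone (insertKnot T k ξb) := by
  refine monotone_int_of_le_succ fun i ↦ ?_
  rcases lt_trichotomy i k with h | rfl | h
  · rw [insertKnot_of_le h.le, insertKnot_of_le h]
    exact hT (by omega)
  · rw [insertKnot_of_le le_rfl, insertKnot_self_add_one]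
    exact hξ.1
  · rcases (show k + 1 ≤ i by omega).eq_or_lt with rfl | h'
    · rw [insertKnot_self_add_one, insertKnot_of_lt (by omega), add_sub_cancel_right]
      exact hξ.2.le
    · rw [insertKnot_of_lt h', insertKnot_of_lt (by omega), add_sub_cancel_right]
      exact hT (by omega)

-- `M` stands for the new basis function that the coefficient multiplies: only its support
-- matters, when `ξb` coincides with an old knot.
lemma insertWeight_left_coeff {m : ℤ} (i : ℤ) (hm : 0 ≤ m) (x M : ℝ)
    (hM : M ≠ 0 → T' i ≤ x ∧ x < T' (i + m + 1)) :
    divz (x - T i) (T (i + m + 1) - T i) * w m i * M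
      = w (m + 1) i * divz (x - T' i) (T' (i + m + 1) - T' i) * M := by
  rcases lt_trichotomy i (k - m) with hi | rfl | hi
  · rw [insertWeight_of_le (by omega), insertWeight_of_le (by omega), insertKnot_of_le (by omega),
      insertKnot_of_le (by omega)]
    ring
  · rw [show k - m + m + 1 = k + 1 by ring, insertKnot_self_add_one,
      insertKnot_of_le (by omega)] at hM ⊢
    rw [insertWeight_of_le le_rfl, insertWeight_eq_divz (by omega) (by omega),
      show k - m + (m + 1) = k + 1 by ring]
    rcases eq_or_ne M 0 with rfl | hM0
    · simp
    have h1 : ξb - T (k - m) ≠ 0 := by linarith [hM hM0]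
    have h2 := knot_sub_ne_zero hT hξ (by omega : k - m ≤ k) (lt_add_one k)
    simp only [divz_eq_div _ h1, divz_eq_div _ h2]
    field_simp
  · rcases le_or_gt i k with hik | hik
    · rw [insertWeight_eq_divz (by omega) hik, insertWeight_eq_divz (by omega) hik,
        insertKnot_of_le hik, insertKnot_of_lt (by omega), add_sub_cancel_right, ← add_assoc]
      simp only [divz_eq_div _ (knot_sub_ne_zero hT hξ hik (by omega : k < i + m)),
        divz_eq_div _ (knot_sub_ne_zero hT hξ hik (by omega : k < i + m + 1))]
      ring
    · rw [insertWeight_of_lt hm hik, insertWeight_of_lt (by omega) hik]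
      ring

lemma insertWeight_middle_coeff {m : ℤ} (i : ℤ) (hm : 0 ≤ m) (x M : ℝ)
    (hM : M ≠ 0 → T' (i + 1) ≤ x ∧ x < T' (i + m + 2)) :
    (divz (x - T i) (T (i + m + 1) - T i) * (1 - w m (i + 1))
        + divz (T (i + m + 2) - x) (T (i + m + 2) - T (i + 1)) * w m (i + 1)) * M
      = (w (m + 1) i * divz (T' (i + m + 2) - x) (T' (i + m + 2) - T' (i + 1))
        + (1 - w (m + 1) (i + 1)) * divz (x - T' (i + 1)) (T' (i + m + 2) - T' (i + 1))) * M := by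
  rcases le_or_gt i (k - m - 2) with hi | hi
  · rw [insertWeight_of_le (by omega), insertWeight_of_le (by omega),
      insertWeight_of_le (by omega), insertKnot_of_le (by omega), insertKnot_of_le (by omega)]
    ring
  rcases (show k - m - 1 ≤ i by omega).eq_or_lt with rfl | hi
  · have hk : k - m - 1 + m + 2 = k + 1 := by ring
    rw [hk, insertKnot_self_add_one, insertKnot_of_le (by omega)] at hM ⊢
    rw [insertWeight_of_le (by omega), insertWeight_of_le (by omega),
      insertWeight_eq_divz (by omega) (by omega), show k - m - 1 + 1 + (m + 1) = k + 1 by ring]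
    rcases eq_or_ne M 0 with rfl | hM0
    · simp
    have h1 : ξb - T (k - m - 1 + 1) ≠ 0 := by linarith [hM hM0]
    have h2 := knot_sub_ne_zero hT hξ (by omega : k - m - 1 + 1 ≤ k) (lt_add_one k)
    simp only [divz_eq_div _ h1, divz_eq_div _ h2]
    field_simp
    ring
  have hhigh : T' (i + m + 2) = T (i + m + 1) :=
    (insertKnot_of_lt (by omega)).trans (congrArg T (by ring))
  rcases lt_trichotomy i k with hik | hik | hik
  · have h1 := knot_sub_ne_zero hT hξ (by omega : i + 1 ≤ k) (by omega : k < i + m + 1)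
    have h2 := knot_sub_ne_zero hT hξ (by omega : i ≤ k) (by omega : k < i + m + 1)
    have h3 := knot_sub_ne_zero hT hξ (by omega : i + 1 ≤ k) (by omega : k < i + m + 2)
    rw [insertWeight_eq_divz (by omega) (by omega), insertWeight_eq_divz (by omega) (by omega),
      insertWeight_eq_divz (by omega) (by omega), hhigh, insertKnot_of_le (by omega),
      show i + 1 + m = i + m + 1 by ring, show i + (m + 1) = i + m + 1 by ring,
      show i + 1 + (m + 1) = i + m + 2 by ring]
    simp only [divz_eq_div _ h1, divz_eq_div _ h2, divz_eq_div _ h3]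
    field_simp
    ring
  · subst i
    have h1 := knot_sub_ne_zero hT hξ le_rfl (by omega : k < k + m + 1)
    have h2 := knot_sub_insert_ne_zero hT hξ (by omega : k < k + m + 1)
    rw [insertWeight_of_lt hm (by omega), insertWeight_eq_divz (by omega) le_rfl,
      insertWeight_of_lt (by omega) (by omega), hhigh, insertKnot_self_add_one,
      show k + (m + 1) = k + m + 1 by ring]
    simp only [divz_eq_div _ h1, divz_eq_div _ h2]
    field_simp
    ring
  · rw [insertWeight_of_lt hm (by omega), insertWeight_of_lt (by omega) (by omega),
      insertWeight_of_lt (by omega) (by omega), hhigh, insertKnot_of_lt (by omega),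
      add_sub_cancel_right]
    ring

lemma insertWeight_right_coeff {m : ℤ} (i : ℤ) (hm : 0 ≤ m) (x : ℝ) :
    divz (T (i + m + 2) - x) (T (i + m + 2) - T (i + 1)) * (1 - w m (i + 2))
      = (1 - w (m + 1) (i + 1)) * divz (T' (i + m + 3) - x) (T' (i + m + 3) - T' (i + 2)) := by
  rcases le_or_gt i (k - m - 2) with hi | hi
  · rw [insertWeight_of_le (by omega), insertWeight_of_le (by omega)]
    ring
  have hhigh : T' (i + m + 3) = T (i + m + 2) :=
    (insertKnot_of_lt (by omega)).trans (congrArg T (by ring))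
  rcases lt_trichotomy i (k - 1) with hik | rfl | hik
  · have h1 := knot_sub_ne_zero hT hξ (by omega : i + 1 ≤ k) (by omega : k < i + m + 2)
    have h2 := knot_sub_ne_zero hT hξ (by omega : i + 2 ≤ k) (by omega : k < i + m + 2)
    rw [insertWeight_eq_divz (by omega) (by omega), insertWeight_eq_divz (by omega) (by omega),
      hhigh, insertKnot_of_le (by omega), show i + 2 + m = i + m + 2 by ring,
      show i + 1 + (m + 1) = i + m + 2 by ring]
    simp only [divz_eq_div _ h1, divz_eq_div _ h2]
    field_simp
    ring
  · have h1 := knot_sub_ne_zero hT hξ le_rfl (by omega : k < k - 1 + m + 2)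
    have h2 := knot_sub_insert_ne_zero hT hξ (by omega : k < k - 1 + m + 2)
    rw [insertWeight_of_lt hm (by omega), insertWeight_eq_divz (by omega) (by omega),
      hhigh, show k - 1 + 2 = k + 1 by ring, insertKnot_self_add_one, sub_add_cancel,
      show k + (m + 1) = k - 1 + m + 2 by ring]
    simp only [divz_eq_div _ h1, divz_eq_div _ h2]
    field_simp
    ring
  · rw [insertWeight_of_lt hm (by omega), insertWeight_of_lt (by omega) (by omega), hhigh,
      insertKnot_of_lt (by omega), show i + 2 - 1 = i + 1 by ring]
    ring

theorem bspl_eq_insertKnot_combination (q : ℕ) (i : ℤ) (x : ℝ) :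
    bspl T q i x = w q i * bspl T' q i x + (1 - w q (i + 1)) * bspl T' q (i + 1) x := by
  induction q generalizing i with
  | zero =>
    simp only [bspl, Nat.cast_zero]
    rcases lt_trichotomy i k with hik | hik | hik
    · rw [insertWeight_of_le (by omega), insertWeight_of_le (by omega), insertKnot_of_le hik.le,
        insertKnot_of_le hik]
      ring
    · subst i
      rw [insertWeight_of_le (by omega), insertWeight_of_lt le_rfl (by omega),
        insertKnot_of_le le_rfl, insertKnot_self_add_one, insertKnot_of_lt (by omega),
        add_sub_cancel_right, indicator_Ico_split hξ.1 hξ.2.le]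
      ring
    · rw [insertWeight_of_lt le_rfl hik, insertWeight_of_lt le_rfl (by omega),
        insertKnot_of_lt (i := i + 1) (by omega), insertKnot_of_lt (i := i + 1 + 1) (by omega),
        add_sub_cancel_right, add_sub_cancel_right]
      ring
  | succ q ih =>
    have hT' := monotone_insertKnot hT hξ
    have hm : (0 : ℤ) ≤ q := q.cast_nonneg
    have hsupp₀ (h : bspl T' q i x ≠ 0) := bspl_support hT' h
    have hsupp₁ (h : bspl T' q (i + 1) x ≠ 0) : T' (i + 1) ≤ x ∧ x < T' (i + q + 2) := by
      simpa only [show i + 1 + q + 1 = i + q + 2 by ring] using bspl_support hT' h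
    simp only [bspl, ih i, ih (i + 1), Nat.cast_add_one,
      show i + 1 + 1 = i + 2 by ring, show i + 1 + (q : ℤ) + 1 = i + q + 2 by ring,
      show i + 1 + (q : ℤ) + 2 = i + q + 3 by ring]
    have hleft := insertWeight_left_coeff hT hξ i hm x _ hsupp₀
    have hmiddle := insertWeight_middle_coeff hT hξ i hm x _ hsupp₁
    have hright := insertWeight_right_coeff hT hξ i hm x
    linear_combination hleft + hmiddle + bspl T' q (i + 2) x * hright

end

/-- Boehm's knot insertion theorem: inserting one knot `ξ̄ ∈ [ξ_k, ξ_{k+1})`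
and updating the control points by the convex combinations
`B̄_i = α_i B_i + (1-α_i) B_{i-1}` leaves the B-spline curve geometrically
unchanged on the parameter domain. -/
theorem knot_insertion_preserves_curve (d : ℕ) (p : ℕ) (n k : ℤ) (T : ℤ → ℝ)
    (hT : Monotone T) (B : ℤ → EuclideanSpace ℝ (Fin d)) (ξb : ℝ)
    (hk1 : (p : ℤ) + 1 ≤ k) (hk2 : k ≤ n)
    (hξb1 : T k ≤ ξb) (hξb2 : ξb < T (k + 1))
    (T' : ℤ → ℝ)
    (hT' : ∀ i, T' i = if i ≤ k then T i else if i = k + 1 then ξb else T (i - 1))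
    (α : ℤ → ℝ)
    (hα : ∀ i, α i = if i ≤ k - (p : ℤ) then (1 : ℝ)
        else if i ≤ k then (ξb - T i) / (T (i + (p : ℤ)) - T i) else 0)
    (B' : ℤ → EuclideanSpace ℝ (Fin d))
    (hB' : ∀ i, B' i = α i • B i + (1 - α i) • B (i - 1)) :
    ∀ ξ ∈ Set.Ico (T ((p : ℤ) + 1)) (T (n + 1)),
      ∑ i ∈ Finset.Icc (1 : ℤ) (n + 1), bspl T' p i ξ • B' i
        = ∑ i ∈ Finset.Icc (1 : ℤ) n, bspl T p i ξ • B i := by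
  intro ξ _
  have hξ : ξb ∈ Set.Ico (T k) (T (k + 1)) := ⟨hξb1, hξb2⟩
  obtain rfl : T' = insertKnot T k ξb := funext hT'
  obtain rfl : α = insertWeight T k ξb p := by
    ext i
    rw [hα, insertWeight]
    split_ifs with _ h₂ <;> try rfl
    rw [divz_eq_div _ (knot_sub_ne_zero hT hξ h₂ (by omega))]
  simp only [hB']
  rw [← sum_Icc_combination_smul (by omega) _ _ B (insertWeight_of_le (by omega))
    (insertWeight_of_lt p.cast_nonneg (by omega))]
  exact sum_congr rfl fun i _ ↦ by rw [bspl_eq_insertKnot_combination hT hξ, add_smul]
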